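/- arXiv:1908.02032 — 4 statements merged into one kernel-verified Lean document; each statement's English description precedes it below -/
import Mathlib

section
/- Let A be an n×n complex matrix, v ∈ ℂ^{n×s} a block vector, and Ψ = (ψ₁,…,ψ_ℓ) poles with ψⱼ ∈ ℂ ∪ {∞}, none of which is an eigenvalue of A; set q(z) := ∏_{j: ψⱼ≠∞}(z − ψⱼ). Let U be an orthonormal basis of RK_ℓ(A,v,Ψ) and A_ℓ := UᴴAU. Then for every polynomial p of degree at most ℓ such that q(A_ℓ) is invertible, one has q(A)⁻¹ p(A) v = U · q(A_ℓ)⁻¹ p(A_ℓ) · (Uᴴ v); in particular the columns of q(A)⁻¹ p(A) v lie in RK_ℓ(A,v,Ψ). -/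
open Matrix Polynomial Set MeasureTheory Filter Topology
open scoped ComplexOrder ENNReal NNReal

noncomputable section

/-- The denominator polynomial `q(z) = ∏_{ψⱼ ≠ ∞} (z - ψⱼ)` associated to a tuple of
poles `Ψ`, where `none` encodes the pole at infinity. -/
def qpoly {ℓ : ℕ} (Ψ : Fin ℓ → Option ℂ) : Polynomial ℂ :=
  ∏ j : Fin ℓ, (Ψ j).elim 1 fun ψ => X - C ψ

/-- The rational Krylov subspace `RK_ℓ(A, v, Ψ)`: the span of the columns of
`q(A)⁻¹ Aⁱ v` for `0 ≤ i ≤ ℓ`. -/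
def RK {n s : ℕ} (ℓ : ℕ) (A : Matrix (Fin n) (Fin n) ℂ)
    (v : Matrix (Fin n) (Fin s) ℂ) (Ψ : Fin ℓ → Option ℂ) : Submodule ℂ (Fin n → ℂ) :=
  Submodule.span ℂ
    { x | ∃ i ≤ ℓ, ∃ j, x = ((Polynomial.aeval A (qpoly Ψ))⁻¹ * A ^ i * v)ᵀ j }

/-- The span of the columns of a matrix. -/
def colSpan {n m : ℕ} (U : Matrix (Fin n) (Fin m) ℂ) : Submodule ℂ (Fin n → ℂ) :=
  Submodule.span ℂ (Set.range fun j => Uᵀ j)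

/-- `U` is a matrix with orthonormal columns whose column span is the subspace `W`. -/
def IsONBasisOf {n m : ℕ} (U : Matrix (Fin n) (Fin m) ℂ)
    (W : Submodule ℂ (Fin n → ℂ)) : Prop :=
  Uᴴ * U = 1 ∧ colSpan U = W

/-- The spectral norm (ℓ² operator norm) of a rectangular complex matrix; it is also the
Euclidean norm when the matrix is a single column vector. -/
def norm2 {m n : ℕ} (A : Matrix (Fin m) (Fin n) ℂ) : ℝ :=
  ‖LinearMap.toContinuousLinearMap (Matrix.toEuclideanLin A)‖

/-- The convergence rate `ρ_{[α,β]} = exp(-π² / log(4β/α))`. -/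
def rho (α β : ℝ) : ℝ := Real.exp (-(Real.pi ^ 2) / Real.log (4 * β / α))

/-- The constant `γ_{ℓ,κ} = 2.23 + (2/π)·log(4ℓ·√(κ/π))`. -/
def gammaLK (ℓ : ℕ) (κ : ℝ) : ℝ :=
  2.23 + (2 / Real.pi) * Real.log (4 * ℓ * Real.sqrt (κ / Real.pi))

/-! With `y := q(A)⁻¹ v`, the rational Krylov space is the polynomial Krylov space spanned by
the columns of `Aⁱ y`, `i ≤ ℓ`, so the projection `U Uᴴ` fixes each of them. Induction on `i`
then gives `Uᴴ Aⁱ y = A_ℓⁱ Uᴴ y` for `i ≤ ℓ`, hence `Uᴴ r(A) y = r(A_ℓ) Uᴴ y` whenever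
`deg r ≤ ℓ`. For `r = q` this reads `Uᴴ y = q(A_ℓ)⁻¹ Uᴴ v`; for `r = p` it computes
`Uᴴ q(A)⁻¹ p(A) v`, and `U Uᴴ` fixes `q(A)⁻¹ p(A) v = p(A) y` because its columns lie in the
Krylov space. -/

namespace Matrix

variable {n m s R : Type*} [Fintype n]

lemma col_mul [NonUnitalNonAssocSemiring R] (M : Matrix m n R) (N : Matrix n s R) (j : s) :
    (M * N).col j = M *ᵥ N.col j :=
  rfl

variable [Fintype m] [DecidableEq m]

lemma mul_mul_eq_self_of_col_mem_span [CommSemiring R] {U : Matrix n m R}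
    {W : Matrix m n R} (hWU : W * U = 1) {X : Matrix n s R}
    (hX : ∀ j, X.col j ∈ Submodule.span R (range U.col)) : U * (W * X) = X := by
  refine ext_col fun j => ?_
  obtain ⟨c, hc⟩ := LinearMap.mem_range.mp ((range_mulVecLin U).symm ▸ hX j)
  rw [col_mul, col_mul, ← hc, mulVecLin_apply, mulVec_mulVec c W U, hWU, one_mulVec]

variable [DecidableEq n]

lemma mul_pow_mul_eq_compression_pow_mul [Semiring R] (V : Matrix m n R) (W : Matrix n m R)
    (A : Matrix n n R) (y : Matrix n s R) {ℓ : ℕ}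
    (h : ∀ k < ℓ, W * (V * (A ^ k * y)) = A ^ k * y) :
    ∀ i ≤ ℓ, V * (A ^ i * y) = (V * A * W) ^ i * (V * y) := by
  intro i hi
  induction i with
  | zero => simp
  | succ k ih =>
    calc V * (A ^ (k + 1) * y) = V * A * (W * (V * (A ^ k * y))) := by
          rw [h k hi, pow_succ', Matrix.mul_assoc, Matrix.mul_assoc]
      _ = (V * A * W) ^ (k + 1) * (V * y) := by
          rw [ih (by omega), pow_succ']
          simp only [Matrix.mul_assoc]

lemma mul_aeval_mul_eq_compression_aeval_mul [CommRing R] (V : Matrix m n R) (W : Matrix n m R)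
    (A : Matrix n n R) (y : Matrix n s R) {ℓ : ℕ}
    (h : ∀ k < ℓ, W * (V * (A ^ k * y)) = A ^ k * y) {r : R[X]} (hr : r.natDegree ≤ ℓ) :
    V * (aeval A r * y) = aeval (V * A * W) r * (V * y) := by
  simp only [aeval_eq_sum_range, Matrix.sum_mul, Matrix.mul_sum, Matrix.smul_mul,
    Matrix.mul_smul]
  refine Finset.sum_congr rfl fun i hi => ?_
  rw [mul_pow_mul_eq_compression_pow_mul V W A y h i (by grind)]

lemma col_aeval_mul_mem [CommRing R] {S : Submodule R (n → R)} {A : Matrix n n R}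
    {y : Matrix n s R} {ℓ : ℕ} (h : ∀ i ≤ ℓ, ∀ j, (A ^ i * y).col j ∈ S) {r : R[X]}
    (hr : r.natDegree ≤ ℓ) (j : s) : (aeval A r * y).col j ∈ S := by
  have hcol : (aeval A r * y).col j =
      ∑ i ∈ Finset.range (r.natDegree + 1), r.coeff i • (A ^ i * y).col j := by
    ext k
    simp [aeval_eq_sum_range, Matrix.sum_mul, Matrix.sum_apply]
  rw [hcol]
  exact S.sum_mem fun i hi => S.smul_mem _ (h i (by grind) j)

lemma commute_aeval_inv [CommRing R] (A : Matrix n n R) (p q : R[X]) :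
    Commute (aeval A p) (aeval A q)⁻¹ := by
  simpa only [zpow_neg_one] using Commute.zpow_right ((Commute.all p q).map (aeval A)) (-1)

end Matrix

lemma isUnit_aeval_qpoly {𝒜 : Type*} [Ring 𝒜] [Algebra ℂ 𝒜] {a : 𝒜} {ℓ : ℕ}
    {Ψ : Fin ℓ → Option ℂ} (hΨ : ∀ j ψ, Ψ j = some ψ → ψ ∉ spectrum ℂ a) :
    IsUnit (aeval a (qpoly Ψ)) := by
  refine Finset.prod_induction _ (fun f => IsUnit (aeval a f))
    (fun f g hf hg => by simpa only [map_mul] using hf.mul hg) (by simp) fun j _ => ?_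
  cases hj : Ψ j with
  | none => simp
  | some ψ => simpa using (spectrum.notMem_iff.mp (hΨ j ψ hj)).neg

lemma natDegree_qpoly_le {ℓ : ℕ} (Ψ : Fin ℓ → Option ℂ) : (qpoly Ψ).natDegree ≤ ℓ := by
  refine (natDegree_prod_le _ _).trans ?_
  calc ∑ j, ((Ψ j).elim 1 fun ψ => X - C ψ : ℂ[X]).natDegree ≤ ∑ _j : Fin ℓ, 1 :=
        Finset.sum_le_sum fun j _ => by cases Ψ j <;> simp
    _ = ℓ := by simp

/-- Exactness property of rational Krylov subspaces. -/
theorem rational_krylov_exactness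
    {n s m ℓ : ℕ}
    (A : Matrix (Fin n) (Fin n) ℂ) (v : Matrix (Fin n) (Fin s) ℂ)
    (Ψ : Fin ℓ → Option ℂ)
    (hΨ : ∀ j ψ, Ψ j = some ψ → ψ ∉ spectrum ℂ A)
    (U : Matrix (Fin n) (Fin m) ℂ) (hU : IsONBasisOf U (RK ℓ A v Ψ))
    (Aℓ : Matrix (Fin m) (Fin m) ℂ) (hAℓ : Aℓ = Uᴴ * A * U)
    (p : Polynomial ℂ) (hp : p.natDegree ≤ ℓ)
    (hqinv : IsUnit (Polynomial.aeval Aℓ (qpoly Ψ))) :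
    (Polynomial.aeval A (qpoly Ψ))⁻¹ * Polynomial.aeval A p * v =
      U * ((Polynomial.aeval Aℓ (qpoly Ψ))⁻¹ * Polynomial.aeval Aℓ p * (Uᴴ * v)) ∧
    ∀ j, ((Polynomial.aeval A (qpoly Ψ))⁻¹ * Polynomial.aeval A p * v)ᵀ j ∈ RK ℓ A v Ψ := by
  obtain ⟨hUU, hspan⟩ := hU
  set y := (aeval A (qpoly Ψ))⁻¹ * v
  have hy : ∀ r : ℂ[X], aeval A r * y = (aeval A (qpoly Ψ))⁻¹ * aeval A r * v := fun r => by
    rw [← Matrix.mul_assoc, (commute_aeval_inv A r (qpoly Ψ)).eq]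
  have hpow_mem : ∀ i ≤ ℓ, ∀ j, (A ^ i * y).col j ∈ RK ℓ A v Ψ := fun i hi j => by
    have := hy (X ^ i)
    rw [aeval_X_pow] at this
    exact Submodule.subset_span ⟨i, hi, j, by rw [this]; rfl⟩
  have hproj {Z : Matrix (Fin n) (Fin s) ℂ} (hZ : ∀ j, Z.col j ∈ RK ℓ A v Ψ) :
      U * (Uᴴ * Z) = Z :=
    mul_mul_eq_self_of_col_mem_span hUU fun j => (hspan ▸ hZ j : Z.col j ∈ colSpan U)
  have hcompress {r : ℂ[X]} (hr : r.natDegree ≤ ℓ) :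
      Uᴴ * (aeval A r * y) = aeval Aℓ r * (Uᴴ * y) := by
    subst hAℓ
    exact mul_aeval_mul_eq_compression_aeval_mul Uᴴ U A y
      (fun k hk => hproj (hpow_mem k hk.le)) hr
  have hUy : Uᴴ * y = (aeval Aℓ (qpoly Ψ))⁻¹ * (Uᴴ * v) := by
    have hv : aeval A (qpoly Ψ) * y = v := mul_nonsing_inv_cancel_left _ _
      ((isUnit_iff_isUnit_det _).mp (isUnit_aeval_qpoly hΨ))
    rw [← hv, hcompress (natDegree_qpoly_le Ψ),
      nonsing_inv_mul_cancel_left _ _ ((isUnit_iff_isUnit_det _).mp hqinv)]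
  have hmem : ∀ j, (aeval A p * y).col j ∈ RK ℓ A v Ψ := col_aeval_mul_mem hpow_mem hp
  rw [← hy]
  refine ⟨?_, hmem⟩
  rw [← hproj hmem, hcompress hp, hUy, ← Matrix.mul_assoc (aeval Aℓ p),
    (commute_aeval_inv Aℓ p _).eq]
end
end

section
/- Let 0 < a ≤ b, ℓ ≥ 1, γ₁,…,γ_ℓ ∈ [a,b], κ := b/a, and define θ(s) := −2·∑_{j=1}^ℓ arctan(s/γⱼ) for s ≥ 0. Define f(t) := 1/2 + ((−1)^ℓ/π)·lim_{T→∞} ∫₀^T sin(st + θ(s))/s ds (the improper integral converges for every t > 0). Then for every t > 0, |f(t)| ≤ 2.23 + (2/π)·log(4ℓ·√(κ/π)). (The function f is the inverse Laplace transform of r̂(s) = (1/s)·∏_{j=1}^ℓ (γⱼ − s)/(γⱼ + s).) -/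
open Matrix Polynomial Set MeasureTheory Filter Topology
open scoped ComplexOrder ENNReal NNReal

noncomputable section

/-!
For `s > 0` the phase is `θ(s) = η(s) - ℓπ` with `0 ≤ η(s) = 2∑ arctan(γⱼ/s) ≤ E/s`, `E = 2∑ γⱼ`,
while `|θ(s)| ≤ m s` with `m = 2∑ 1/γⱼ`, and `mE ≤ 4ℓ²κ`. Cut `∫₀^∞ sin(st + θ(s))/s ds` at
`1/(t+m)`, `1/m` and `R = max(1/m, E)`. The integrand is bounded by `t + m` and by `1/s`, so the
first piece is at most `1` and `[1/m, R]` contributes at most `log(max(1, mE))`. Beyond `R` the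
integrand is `(-1)^ℓ sin(st)/s` up to `E/s²`, leaving a sine-integral tail plus at most `E/R ≤ 1`.
On `[1/(t+m), 1/m]` either `t ≤ 5m/2` and the `1/s` bound gives `log((t+m)/m) ≤ log(7/2)`, or
`t` is large and, past `π/(2t)`, the phase is negligible so the piece is again a sine integral.
The sine-integral tails are bounded through their Laplace representation
`∫_c^∞ sin u / u du = ∫₀^∞ e^{-cx} (x sin c + cos c)/(1 + x²) dx`.
-/

open Real

lemma integral_exp_neg_mul_Ioi {c : ℝ} (hc : 0 < c) : ∫ x in Ioi 0, exp (-c * x) = 1 / c := by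
  rw [integral_exp_mul_Ioi (neg_lt_zero.2 hc)]
  field_simp
  simp

lemma integrableOn_exp_neg_mul_Ioi {c : ℝ} (hc : 0 < c) :
    IntegrableOn (fun x => exp (-c * x)) (Ioi 0) :=
  integrableOn_exp_mul_Ioi (neg_lt_zero.2 hc) 0

lemma integral_mul_exp_neg_mul_Ioi {c : ℝ} (hc : 0 < c) :
    ∫ x in Ioi 0, x * exp (-c * x) = 1 / c ^ 2 := by
  have := integral_rpow_mul_exp_neg_mul_Ioi two_pos hc
  norm_num at this
  simpa [neg_mul] using this

lemma integrableOn_mul_exp_neg_mul_Ioi {c : ℝ} (hc : 0 < c) :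
    IntegrableOn (fun x => x * exp (-c * x)) (Ioi 0) := by
  simpa using integrableOn_rpow_mul_exp_neg_mul_rpow (s := 1) (p := 1) (by norm_num) one_pos hc

lemma div_sq_eqOn_mul_rpow (E : ℝ) {R : ℝ} (hR : 0 < R) :
    EqOn (fun s : ℝ => E / s ^ 2) (fun s => E * s ^ (-2 : ℝ)) (Ioi R) := fun s hs => by
  simp only [rpow_neg (hR.trans hs).le, rpow_two, div_eq_mul_inv]

lemma integrableOn_Ioi_div_sq (E : ℝ) {R : ℝ} (hR : 0 < R) :
    IntegrableOn (fun s : ℝ => E / s ^ 2) (Ioi R) :=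
  IntegrableOn.congr_fun
    ((integrableOn_Ioi_rpow_of_lt (by norm_num : (-2 : ℝ) < -1) hR).const_mul E)
    (div_sq_eqOn_mul_rpow E hR).symm measurableSet_Ioi

lemma integral_Ioi_div_sq (E : ℝ) {R : ℝ} (hR : 0 < R) : ∫ s in Ioi R, E / s ^ 2 = E / R := by
  rw [setIntegral_congr_fun measurableSet_Ioi (div_sq_eqOn_mul_rpow E hR), integral_const_mul,
    integral_Ioi_rpow_of_lt (by norm_num) hR]
  norm_num [rpow_neg_one, div_eq_mul_inv]

lemma abs_integral_le_log_div {f : ℝ → ℝ} {x y : ℝ} (hx : 0 < x) (hxy : x ≤ y)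
    (hf : ∀ s ∈ Ioc x y, |f s| ≤ 1 / s) : |∫ s in x..y, f s| ≤ log (y / x) := by
  rw [← integral_one_div_of_pos hx (hx.trans_le hxy)]
  refine intervalIntegral.norm_integral_le_of_norm_le (f := f) (g := fun s => 1 / s) hxy
    (ae_of_all _ hf) ?_
  exact (continuousOn_const.div continuousOn_id fun s hs =>
    (hx.trans_le (uIcc_of_le hxy ▸ hs).1).ne').intervalIntegrable

lemma arctan_le_self {x : ℝ} (hx : 0 ≤ x) : arctan x ≤ x := by
  simpa using le_tan (arctan_nonneg.2 hx) (arctan_lt_pi_div_two x)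

lemma abs_sin_div_le {s : ℝ} (x : ℝ) (hs : 0 < s) : |sin x / s| ≤ 1 / s := by
  rw [abs_div, abs_of_pos hs]
  gcongr
  exact abs_sin_le_one x

/-- `sinTailKernel c x = ∫_c^∞ e^{-xu} sin u du`, so that by Fubini `sinIntegralTail c` is the
improper integral `∫_c^∞ sin u / u du` (see `tendsto_integral_sin_div`). -/
def sinTailKernel (c x : ℝ) : ℝ := exp (-c * x) * (x * sin c + cos c) / (1 + x ^ 2)

def sinIntegralTail (c : ℝ) : ℝ := ∫ x in Ioi 0, sinTailKernel c x

lemma hasDerivAt_neg_sinTailKernel (x u : ℝ) :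
    HasDerivAt (fun v => -sinTailKernel v x) (exp (-u * x) * sin u) u := by
  have hexp : HasDerivAt (fun v : ℝ => exp (-v * x)) (exp (-u * x) * (-x)) u := by
    simpa using ((hasDerivAt_id u).neg.mul_const x).exp
  have htrig : HasDerivAt (fun v : ℝ => x * sin v + cos v) (x * cos u - sin u) u := by
    simpa [sub_eq_add_neg] using ((hasDerivAt_sin u).const_mul x).fun_add (hasDerivAt_cos u)
  refine ((hexp.fun_mul htrig).div_const (1 + x ^ 2)).fun_neg.congr_deriv ?_
  field_simp
  ring

lemma integral_exp_mul_sin (x c d : ℝ) :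
    ∫ u in c..d, exp (-u * x) * sin u = sinTailKernel c x - sinTailKernel d x := by
  rw [intervalIntegral.integral_eq_sub_of_hasDerivAt (fun u _ => hasDerivAt_neg_sinTailKernel x u)
    ((by fun_prop : Continuous fun u => exp (-u * x) * sin u).intervalIntegrable _ _)]
  ring

lemma abs_sinTailKernel_le {x : ℝ} (c : ℝ) (hx : 0 ≤ x) :
    |sinTailKernel c x| ≤ exp (-c * x) * (x * |sin c| + |cos c|) / (1 + x ^ 2) := by
  rw [sinTailKernel, abs_div, abs_mul, abs_exp, abs_of_pos (by positivity : 0 < 1 + x ^ 2)]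
  gcongr
  exact (abs_add_le _ _).trans_eq (by rw [abs_mul, abs_of_nonneg hx])

lemma abs_sinTailKernel_le_exp {c x : ℝ} (hx : 0 ≤ x) :
    |sinTailKernel c x| ≤ exp (-c * x) + x * exp (-c * x) := by
  refine (abs_sinTailKernel_le c hx).trans <| (div_le_self (by positivity) (by nlinarith)).trans ?_
  calc exp (-c * x) * (x * |sin c| + |cos c|) ≤ exp (-c * x) * (x * 1 + 1) := by
        gcongr
        exacts [abs_sin_le_one c, abs_cos_le_one c]
    _ = exp (-c * x) + x * exp (-c * x) := by ring

lemma abs_sinTailKernel_le_inv_one_add_sq {c x : ℝ} (hc : 0 ≤ c) (hx : 0 ≤ x) :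
    |sinTailKernel c x| ≤ |cos c| * (1 + x ^ 2)⁻¹ + |sin c| / 2 * exp (-c * x) := by
  refine (abs_sinTailKernel_le c hx).trans ?_
  have hexp : exp (-c * x) ≤ 1 := exp_le_one_iff.2 (by nlinarith)
  have hx2 : x / (1 + x ^ 2) ≤ 1 / 2 := by
    rw [div_le_iff₀ (by positivity)]; nlinarith [sq_nonneg (x - 1)]
  calc exp (-c * x) * (x * |sin c| + |cos c|) / (1 + x ^ 2)
      = |sin c| * exp (-c * x) * (x / (1 + x ^ 2)) + exp (-c * x) * |cos c| * (1 + x ^ 2)⁻¹ := by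
        ring
    _ ≤ |sin c| * exp (-c * x) * (1 / 2) + 1 * |cos c| * (1 + x ^ 2)⁻¹ := by gcongr
    _ = _ := by ring

lemma integrableOn_sinTailKernel {c : ℝ} (hc : 0 < c) : IntegrableOn (sinTailKernel c) (Ioi 0) := by
  refine Integrable.mono' (g := fun x => exp (-c * x) + x * exp (-c * x))
    ((integrableOn_exp_neg_mul_Ioi hc).add (integrableOn_mul_exp_neg_mul_Ioi hc)) ?_ ?_
  · exact (by unfold sinTailKernel; fun_prop (disch := intro x; positivity) :
    Continuous (sinTailKernel c)).aestronglyMeasurable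
  · filter_upwards [ae_restrict_mem measurableSet_Ioi] with x hx
    exact abs_sinTailKernel_le_exp (le_of_lt hx)

lemma abs_sinIntegralTail_le_inv_add_inv_sq {c : ℝ} (hc : 0 < c) :
    |sinIntegralTail c| ≤ 1 / c + 1 / c ^ 2 := by
  have hint : IntegrableOn (fun x => exp (-c * x) + x * exp (-c * x)) (Ioi 0) :=
    (integrableOn_exp_neg_mul_Ioi hc).add (integrableOn_mul_exp_neg_mul_Ioi hc)
  have hle := norm_integral_le_of_norm_le (f := sinTailKernel c) hint <|
    (ae_restrict_mem measurableSet_Ioi).mono fun x hx => abs_sinTailKernel_le_exp (le_of_lt hx)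
  rwa [integral_add (integrableOn_exp_neg_mul_Ioi hc) (integrableOn_mul_exp_neg_mul_Ioi hc),
    integral_exp_neg_mul_Ioi hc, integral_mul_exp_neg_mul_Ioi hc] at hle

lemma abs_sinIntegralTail_le_of_pos {c : ℝ} (hc : 0 < c) :
    |sinIntegralTail c| ≤ |cos c| * (π / 2) + |sin c| / (2 * c) := by
  have hint₁ : IntegrableOn (fun x : ℝ => |cos c| * (1 + x ^ 2)⁻¹) (Ioi 0) :=
    integrable_inv_one_add_sq.integrableOn.const_mul _
  have hint₂ := (integrableOn_exp_neg_mul_Ioi hc).const_mul (|sin c| / 2)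
  have hint : IntegrableOn (fun x => |cos c| * (1 + x ^ 2)⁻¹ + |sin c| / 2 * exp (-c * x))
      (Ioi 0) := hint₁.add hint₂
  have hle := norm_integral_le_of_norm_le (f := sinTailKernel c) hint <|
    (ae_restrict_mem measurableSet_Ioi).mono fun x hx =>
      abs_sinTailKernel_le_inv_one_add_sq hc.le (le_of_lt hx)
  rw [integral_add hint₁ hint₂, integral_const_mul, integral_const_mul,
    integral_Ioi_inv_one_add_sq, integral_exp_neg_mul_Ioi hc, arctan_zero] at hle
  refine hle.trans_eq ?_
  field_simp
  ring

lemma integral_sin_div_eq_sub {c d : ℝ} (hc : 0 < c) (hcd : c ≤ d) :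
    ∫ u in c..d, sin u / u = sinIntegralTail c - sinIntegralTail d := by
  set F : ℝ → ℝ → ℝ := fun u x => exp (-u * x) * sin u
  have hlaplace : ∀ u ∈ Ioc c d, sin u / u = ∫ x in Ioi 0, F u x := fun u hu => by
    rw [integral_mul_const, integral_exp_neg_mul_Ioi (hc.trans hu.1)]
    ring
  have hF : Integrable (Function.uncurry F)
      ((volume.restrict (Ioc c d)).prod (volume.restrict (Ioi 0))) := by
    refine Integrable.mono' ((integrable_const (1 : ℝ)).mul_prod (integrableOn_exp_neg_mul_Ioi hc))
      (by fun_prop : Continuous (Function.uncurry F)).aestronglyMeasurable ?_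
    rw [Measure.prod_restrict]
    filter_upwards [ae_restrict_mem (measurableSet_Ioc.prod measurableSet_Ioi)] with z ⟨hu, hx⟩
    rw [Real.norm_eq_abs, Function.uncurry, abs_mul, abs_exp, one_mul]
    calc exp (-z.1 * z.2) * |sin z.1| ≤ exp (-z.1 * z.2) * 1 := by gcongr; exact abs_sin_le_one _
      _ ≤ exp (-c * z.2) := by
        rw [mul_one, exp_le_exp]; nlinarith [hu.1, (show (0 : ℝ) < z.2 from hx)]
  calc ∫ u in c..d, sin u / u = ∫ u in Ioc c d, ∫ x in Ioi 0, F u x := by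
        rw [intervalIntegral.integral_of_le hcd]
        exact setIntegral_congr_fun measurableSet_Ioc hlaplace
    _ = ∫ x in Ioi 0, ∫ u in Ioc c d, F u x := integral_integral_swap hF
    _ = ∫ x in Ioi 0, (sinTailKernel c x - sinTailKernel d x) := by
        congr 1 with x
        rw [← intervalIntegral.integral_of_le hcd, integral_exp_mul_sin]
    _ = sinIntegralTail c - sinIntegralTail d :=
        integral_sub (integrableOn_sinTailKernel hc) (integrableOn_sinTailKernel (hc.trans_le hcd))

lemma tendsto_sinIntegralTail_atTop : Tendsto sinIntegralTail atTop (𝓝 0) := by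
  have hbound : Tendsto (fun c : ℝ => 1 / c + 1 / c ^ 2) atTop (𝓝 0) := by
    simpa using (tendsto_inv_atTop_zero (𝕜 := ℝ)).add
      (tendsto_inv_atTop_zero.comp (tendsto_pow_atTop two_ne_zero))
  refine squeeze_zero_norm' ?_ hbound
  filter_upwards [eventually_gt_atTop 0] with c hc
  exact abs_sinIntegralTail_le_inv_add_inv_sq hc

lemma tendsto_integral_sin_div {c : ℝ} (hc : 0 < c) :
    Tendsto (fun d => ∫ u in c..d, sin u / u) atTop (𝓝 (sinIntegralTail c)) := by
  have hlim := (tendsto_const_nhds (x := sinIntegralTail c)).sub tendsto_sinIntegralTail_atTop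
  rw [sub_zero] at hlim
  refine hlim.congr' ?_
  filter_upwards [eventually_ge_atTop c] with d hd
  exact (integral_sin_div_eq_sub hc hd).symm

lemma integral_sin_mul_div {t u v : ℝ} (ht : 0 < t) (hu : 0 < u) (huv : u ≤ v) :
    ∫ s in u..v, sin (s * t) / s = sinIntegralTail (u * t) - sinIntegralTail (v * t) := by
  have hscale : ∀ s, sin (s * t) / s = t * (sin (s * t) / (s * t)) := fun s => by
    rcases eq_or_ne s 0 with rfl | hs
    · simp
    · field_simp
  simp_rw [hscale, intervalIntegral.integral_const_mul, intervalIntegral.integral_comp_mul_right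
    (fun w => sin w / w) ht.ne', smul_eq_mul, ← mul_assoc, mul_inv_cancel₀ ht.ne', one_mul]
  exact integral_sin_div_eq_sub (by positivity) (by gcongr)

lemma abs_sinIntegralTail_le {c : ℝ} (hc : 0 < c) : |sinIntegralTail c| ≤ π / 2 + 1 / 2 := by
  have hsin : |sin c| / (2 * c) ≤ 1 / 2 := by
    rw [div_le_iff₀ (by positivity)]
    linarith [abs_sin_le_abs (x := c), abs_of_pos hc]
  have hcos : |cos c| * (π / 2) ≤ π / 2 :=
    mul_le_of_le_one_left (by positivity) (abs_cos_le_one c)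
  linarith [abs_sinIntegralTail_le_of_pos hc]

lemma abs_sinIntegralTail_pi_div_two_le : |sinIntegralTail (π / 2)| ≤ 1 / π := by
  have h := abs_sinIntegralTail_le_of_pos (by positivity : 0 < π / 2)
  rwa [cos_pi_div_two, sin_pi_div_two, abs_zero, abs_one, zero_mul, zero_add,
    mul_div_cancel₀ _ two_ne_zero] at h

lemma abs_sinIntegralTail_le_of_five_div_two_le {c : ℝ} (hc : 5 / 2 ≤ c) :
    |sinIntegralTail c| ≤ 14 / 25 := by
  have hc₀ : 0 < c := by linarith
  have h₁ : 1 / c ≤ 2 / 5 := by rw [div_le_iff₀ hc₀]; linarith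
  have h₂ : 1 / c ^ 2 ≤ 4 / 25 := by rw [div_le_iff₀ (by positivity)]; nlinarith
  linarith [abs_sinIntegralTail_le_inv_add_inv_sq hc₀]

section Phase

variable {θ : ℝ → ℝ} {t m : ℝ}

lemma abs_sin_add_div_le (hsmall : ∀ s, 0 ≤ s → |θ s| ≤ m * s) (ht : 0 ≤ t) {s : ℝ}
    (hs : 0 < s) : |sin (s * t + θ s) / s| ≤ t + m := by
  rw [abs_div, abs_of_pos hs, div_le_iff₀ hs]
  calc |sin (s * t + θ s)| ≤ |s * t| + |θ s| := abs_sin_le_abs.trans (abs_add_le _ _)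
    _ ≤ s * t + m * s := by rw [abs_of_nonneg (by positivity)]; linarith [hsmall s hs.le]
    _ = (t + m) * s := by ring

lemma intervalIntegrable_sin_add_div (hθ : Continuous θ) (hsmall : ∀ s, 0 ≤ s → |θ s| ≤ m * s)
    (ht : 0 ≤ t) {u v : ℝ} (hu : 0 ≤ u) (hv : 0 ≤ v) :
    IntervalIntegrable (fun s => sin (s * t + θ s) / s) volume u v := by
  suffices h : ∀ w, 0 ≤ w → IntervalIntegrable (fun s => sin (s * t + θ s) / s) volume 0 w from
    (h u hu).symm.trans (h v hv)
  intro w hw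
  rw [intervalIntegrable_iff_integrableOn_Ioc_of_le hw]
  refine IntegrableOn.of_bound measure_Ioc_lt_top
    ((by fun_prop : Continuous fun s => sin (s * t + θ s)).measurable.div
      measurable_id).aestronglyMeasurable (t + m) ?_
  filter_upwards [ae_restrict_mem measurableSet_Ioc] with s hs
  exact abs_sin_add_div_le hsmall ht hs.1

lemma abs_integral_sin_add_div_le_one (hsmall : ∀ s, 0 ≤ s → |θ s| ≤ m * s) (ht : 0 ≤ t)
    (hm : 0 < m) : |∫ s in 0..(t + m)⁻¹, sin (s * t + θ s) / s| ≤ 1 := by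
  have hδ : 0 < (t + m)⁻¹ := by positivity
  refine (intervalIntegral.norm_integral_le_of_norm_le_const (C := t + m)
    (f := fun s => sin (s * t + θ s) / s) fun s hs => ?_).trans_eq ?_
  · rw [uIoc_of_le hδ.le] at hs
    exact abs_sin_add_div_le hsmall ht hs.1
  · rw [sub_zero, abs_of_pos hδ, mul_inv_cancel₀ (by positivity)]

lemma abs_integral_sin_add_div_le_log {u v : ℝ} (hu : 0 < u) (huv : u ≤ v) :
    |∫ s in u..v, sin (s * t + θ s) / s| ≤ log (v / u) :=
  abs_integral_le_log_div hu huv fun _ hs => abs_sin_div_le _ (hu.trans hs.1)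

lemma abs_integral_sin_add_div_sub_le (hθ : Continuous θ) (hsmall : ∀ s, 0 ≤ s → |θ s| ≤ m * s)
    (ht : 0 < t) {u v : ℝ} (hu : 0 < u) (huv : u ≤ v) :
    |(∫ s in u..v, sin (s * t + θ s) / s) - (sinIntegralTail (u * t) - sinIntegralTail (v * t))|
      ≤ m * (v - u) := by
  have hp : IntervalIntegrable (fun s => sin (s * t) / s) volume u v := by
    simpa using intervalIntegrable_sin_add_div (θ := 0) (m := 0) continuous_const (by simp)
      ht.le hu.le (hu.le.trans huv)
  rw [← integral_sin_mul_div ht hu huv, ← intervalIntegral.integral_sub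
    (intervalIntegrable_sin_add_div hθ hsmall ht.le hu.le (hu.le.trans huv)) hp]
  refine (intervalIntegral.norm_integral_le_of_norm_le_const
    (f := fun s => sin (s * t + θ s) / s - sin (s * t) / s) fun s hs => ?_).trans_eq
    (by rw [abs_of_nonneg (sub_nonneg.2 huv)])
  rw [uIoc_of_le huv] at hs
  have hs₀ : 0 < s := hu.trans hs.1
  rw [Real.norm_eq_abs, ← sub_div, abs_div, abs_of_pos hs₀, div_le_iff₀ hs₀]
  calc |sin (s * t + θ s) - sin (s * t)| ≤ |θ s| := by
        simpa using abs_sin_sub_sin_le (s * t + θ s) (s * t)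
    _ ≤ m * s := hsmall s hs₀.le

lemma abs_integral_sin_add_div_le_one_add_log (hθ : Continuous θ)
    (hsmall : ∀ s, 0 ≤ s → |θ s| ≤ m * s) (ht : 0 ≤ t) (hm : 0 < m) :
    |∫ s in 0..m⁻¹, sin (s * t + θ s) / s| ≤ 1 + log ((t + m) / m) := by
  have hδ : 0 < (t + m)⁻¹ := by positivity
  have hδm : (t + m)⁻¹ ≤ m⁻¹ := inv_anti₀ hm (by linarith)
  rw [← intervalIntegral.integral_add_adjacent_intervals
    (intervalIntegrable_sin_add_div hθ hsmall ht le_rfl hδ.le)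
    (intervalIntegrable_sin_add_div hθ hsmall ht hδ.le (inv_nonneg.2 hm.le))]
  have hlog := abs_integral_sin_add_div_le_log (θ := θ) (t := t) hδ hδm
  rw [inv_div_inv] at hlog
  linarith [abs_add_le (∫ s in 0..(t + m)⁻¹, sin (s * t + θ s) / s)
    (∫ s in (t + m)⁻¹..m⁻¹, sin (s * t + θ s) / s),
    abs_integral_sin_add_div_le_one hsmall ht hm]

/-- Past `π / (2t)` the phase is negligible up to `1 / m`, so there the integral is a difference
of sine-integral tails. -/
lemma abs_integral_sin_add_div_le_of_pi_mul_le (hθ : Continuous θ)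
    (hsmall : ∀ s, 0 ≤ s → |θ s| ≤ m * s) (ht : 0 < t) (hm : 0 < m) (htm : π * m ≤ 2 * t) :
    |∫ s in 0..m⁻¹, sin (s * t + θ s) / s|
      ≤ 2 + log (π * (t + m) / (2 * t)) + |sinIntegralTail (π / 2)|
        + |sinIntegralTail (t / m)| := by
  set δ := π / (2 * t) with hδ_def
  have hδ₀ : 0 < (t + m)⁻¹ := by positivity
  have hδ : 0 < δ := by positivity
  have hδ₀δ : (t + m)⁻¹ ≤ δ := by
    rw [inv_le_iff_one_le_mul₀ (by positivity), div_mul_eq_mul_div, le_div_iff₀ (by positivity)]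
    nlinarith [two_le_pi]
  have hδm : δ ≤ m⁻¹ := by
    rw [div_le_iff₀ (by positivity), inv_mul_eq_div, le_div_iff₀ hm]; linarith
  have hint {u v : ℝ} (hu : 0 ≤ u) (hv : 0 ≤ v) :
      IntervalIntegrable (fun s => sin (s * t + θ s) / s) volume u v :=
    intervalIntegrable_sin_add_div hθ hsmall ht.le hu hv
  rw [← intervalIntegral.integral_add_adjacent_intervals (hint le_rfl hδ₀.le)
      (hint hδ₀.le (inv_nonneg.2 hm.le)),
    ← intervalIntegral.integral_add_adjacent_intervals (hint hδ₀.le hδ.le)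
      (hint hδ.le (inv_nonneg.2 hm.le))]
  have hhead := abs_integral_sin_add_div_le_one hsmall ht.le hm
  have hlog := abs_integral_sin_add_div_le_log (θ := θ) (t := t) hδ₀ hδ₀δ
  have hsine := abs_integral_sin_add_div_sub_le hθ hsmall ht hδ hδm
  rw [show δ * t = π / 2 by rw [hδ_def]; field_simp, inv_mul_eq_div] at hsine
  rw [show δ / (t + m)⁻¹ = π * (t + m) / (2 * t) by rw [hδ_def]; field_simp] at hlog
  have hsine_le : m * (m⁻¹ - δ) ≤ 1 := by
    rw [mul_sub, mul_inv_cancel₀ hm.ne']; linarith [mul_pos hm hδ]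
  set A := ∫ s in 0..(t + m)⁻¹, sin (s * t + θ s) / s
  set B := ∫ s in (t + m)⁻¹..δ, sin (s * t + θ s) / s
  set C := ∫ s in δ..m⁻¹, sin (s * t + θ s) / s
  linarith [abs_add_le A (B + C), abs_add_le B C,
    abs_sub_abs_le_abs_sub C (sinIntegralTail (π / 2) - sinIntegralTail (t / m)),
    abs_sub (sinIntegralTail (π / 2)) (sinIntegralTail (t / m))]

lemma abs_integral_sin_add_div_add_abs_sinIntegralTail_le (hθ : Continuous θ)
    (hsmall : ∀ s, 0 ≤ s → |θ s| ≤ m * s) (ht : 0 < t) (hm : 0 < m) {R : ℝ} (hR : m⁻¹ ≤ R) :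
    |∫ s in 0..m⁻¹, sin (s * t + θ s) / s| + |sinIntegralTail (R * t)| ≤ 9 / 2 := by
  have hRt : t / m ≤ R * t := by rw [div_eq_inv_mul]; gcongr
  have hRt₀ : 0 < R * t := (div_pos ht hm).trans_le hRt
  have htm₀ : 0 < t + m := by linarith
  have hlog2 := log_two_lt_d9
  rcases le_or_gt t (5 / 2 * m) with ht_le | ht_gt
  · have hlog : log ((t + m) / m) ≤ 2 * log 2 := by
      rw [show 2 * log 2 = log (2 ^ 2) by rw [log_pow]; norm_num]
      refine log_le_log (div_pos htm₀ hm) ?_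
      rw [div_le_iff₀ hm]; linarith
    linarith [abs_integral_sin_add_div_le_one_add_log hθ hsmall ht.le hm,
      abs_sinIntegralTail_le hRt₀, pi_lt_d2]
  · have htm : 5 / 2 ≤ t / m := by rw [le_div_iff₀ hm]; linarith
    have hlog : log (π * (t + m) / (2 * t)) ≤ log 2 + (7 * π / 20 - 1) := by
      rw [show π * (t + m) / (2 * t) = 2 * (π * (t + m) / (4 * t)) by field_simp; ring,
        log_mul two_ne_zero (by positivity)]
      gcongr
      refine (log_le_sub_one_of_pos (by positivity)).trans ?_
      rw [sub_le_sub_iff_right, div_le_div_iff₀ (by positivity) (by norm_num)]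
      nlinarith [pi_pos]
    have hpi_inv : 1 / π ≤ 1 / 3 := one_div_le_one_div_of_le three_pos pi_gt_three.le
    linarith [abs_integral_sin_add_div_le_of_pi_mul_le hθ hsmall ht hm (by nlinarith [pi_lt_four]),
      abs_sinIntegralTail_pi_div_two_le, abs_sinIntegralTail_le_of_five_div_two_le htm,
      abs_sinIntegralTail_le_of_five_div_two_le (htm.trans hRt), pi_lt_d2]

variable {E : ℝ} {n : ℕ}

lemma abs_sin_add_div_sub_le (hlarge : ∀ s, 0 < s → |θ s + n * π| ≤ E / s) {s : ℝ} (hs : 0 < s) :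
    |sin (s * t + θ s) / s - (-1) ^ n * (sin (s * t) / s)| ≤ E / s ^ 2 := by
  have hshift : sin (s * t + θ s) = (-1) ^ n * sin (s * t + (θ s + n * π)) := by
    rw [← sin_sub_nat_mul_pi]; ring_nf
  rw [hshift, mul_div_assoc, ← mul_sub, ← sub_div, abs_mul, abs_pow, abs_neg, abs_one, one_pow,
    one_mul, abs_div, abs_of_pos hs, sq, ← div_div]
  gcongr
  calc |sin (s * t + (θ s + n * π)) - sin (s * t)| ≤ |θ s + n * π| := by
        simpa using abs_sin_sub_sin_le (s * t + (θ s + n * π)) (s * t)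
    _ ≤ E / s := hlarge s hs

lemma integrableOn_Ioi_sin_add_div_sub (hθ : Continuous θ)
    (hlarge : ∀ s, 0 < s → |θ s + n * π| ≤ E / s) {R : ℝ} (hR : 0 < R) :
    IntegrableOn (fun s => sin (s * t + θ s) / s - (-1) ^ n * (sin (s * t) / s)) (Ioi R) := by
  refine Integrable.mono' (integrableOn_Ioi_div_sq E hR) ?_ ?_
  · refine ContinuousOn.aestronglyMeasurable ?_ measurableSet_Ioi
    have hne : ∀ s ∈ Ioi R, s ≠ 0 := fun s hs => (hR.trans hs).ne'
    exact ((by fun_prop : Continuous fun s => sin (s * t + θ s)).continuousOn.div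
      continuousOn_id hne).sub (continuousOn_const.mul
      ((by fun_prop : Continuous fun s => sin (s * t)).continuousOn.div continuousOn_id hne))
  · filter_upwards [ae_restrict_mem measurableSet_Ioi] with s hs
    exact abs_sin_add_div_sub_le hlarge (hR.trans hs)

lemma abs_integral_Ioi_sin_add_div_sub_le (hlarge : ∀ s, 0 < s → |θ s + n * π| ≤ E / s)
    {R : ℝ} (hR : 0 < R) :
    |∫ s in Ioi R, (sin (s * t + θ s) / s - (-1) ^ n * (sin (s * t) / s))| ≤ E / R := by
  rw [← integral_Ioi_div_sq E hR]
  refine norm_integral_le_of_norm_le (integrableOn_Ioi_div_sq E hR) (f := fun s =>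
    sin (s * t + θ s) / s - (-1) ^ n * (sin (s * t) / s)) ?_
  filter_upwards [ae_restrict_mem measurableSet_Ioi] with s hs
  exact abs_sin_add_div_sub_le hlarge (hR.trans hs)

lemma tendsto_integral_sin_add_div (hθ : Continuous θ) (hsmall : ∀ s, 0 ≤ s → |θ s| ≤ m * s)
    (hlarge : ∀ s, 0 < s → |θ s + n * π| ≤ E / s) (ht : 0 < t) {R : ℝ} (hR : 0 < R) :
    Tendsto (fun T => ∫ s in 0..T, sin (s * t + θ s) / s) atTop
      (𝓝 ((∫ s in 0..R, sin (s * t + θ s) / s) + (-1) ^ n * sinIntegralTail (R * t)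
        + ∫ s in Ioi R, (sin (s * t + θ s) / s - (-1) ^ n * (sin (s * t) / s)))) := by
  have hK : Tendsto (fun T => sinIntegralTail (R * t) - sinIntegralTail (T * t)) atTop
      (𝓝 (sinIntegralTail (R * t))) := by
    simpa using tendsto_const_nhds.sub
      (tendsto_sinIntegralTail_atTop.comp (tendsto_id.atTop_mul_const ht))
  have hrest := intervalIntegral_tendsto_integral_Ioi R
    (integrableOn_Ioi_sin_add_div_sub (t := t) hθ hlarge hR) tendsto_id
  refine ((tendsto_const_nhds.add (hK.const_mul _)).add hrest).congr' ?_
  filter_upwards [eventually_ge_atTop R] with T hT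
  have hg := intervalIntegrable_sin_add_div hθ hsmall ht.le hR.le (hR.le.trans hT)
  have hp : IntervalIntegrable (fun s => sin (s * t) / s) volume R T := by
    simpa using intervalIntegrable_sin_add_div (θ := 0) (m := 0) continuous_const (by simp)
      ht.le hR.le (hR.le.trans hT)
  simp only [id, ← integral_sin_mul_div ht hR hT]
  rw [intervalIntegral.integral_sub hg (hp.const_mul _), intervalIntegral.integral_const_mul,
    ← intervalIntegral.integral_add_adjacent_intervals
      (intervalIntegrable_sin_add_div hθ hsmall ht.le le_rfl hR.le) hg]
  ring

theorem exists_tendsto_integral_sin_add_div (hθ : Continuous θ)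
    (hsmall : ∀ s, 0 ≤ s → |θ s| ≤ m * s) (hlarge : ∀ s, 0 < s → |θ s + n * π| ≤ E / s)
    (ht : 0 < t) (hm : 0 < m) :
    ∃ I, Tendsto (fun T => ∫ s in 0..T, sin (s * t + θ s) / s) atTop (𝓝 I) ∧
      |I| ≤ 11 / 2 + log (max 1 (m * E)) := by
  set R := max m⁻¹ E
  have hmR : m⁻¹ ≤ R := le_max_left _ _
  have hR : 0 < R := (inv_pos.2 hm).trans_le hmR
  refine ⟨_, tendsto_integral_sin_add_div hθ hsmall hlarge ht hR, ?_⟩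
  have hhead := abs_integral_sin_add_div_add_abs_sinIntegralTail_le hθ hsmall ht hm hmR
  have hmid := abs_integral_sin_add_div_le_log (θ := θ) (t := t) (inv_pos.2 hm) hmR
  rw [div_inv_eq_mul, max_mul_of_nonneg _ _ hm.le, inv_mul_cancel₀ hm.ne', mul_comm E] at hmid
  have htail := abs_integral_Ioi_sin_add_div_sub_le (t := t) hlarge hR
  have hER : E / R ≤ 1 := (div_le_one hR).2 (le_max_right _ _)
  rw [← intervalIntegral.integral_add_adjacent_intervals
    (intervalIntegrable_sin_add_div hθ hsmall ht.le le_rfl (inv_pos.2 hm).le)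
    (intervalIntegrable_sin_add_div hθ hsmall ht.le (inv_pos.2 hm).le hR.le)]
  have hsign : |(-1 : ℝ) ^ n * sinIntegralTail (R * t)| = |sinIntegralTail (R * t)| := by
    simp [abs_mul]
  set A := ∫ s in 0..m⁻¹, sin (s * t + θ s) / s
  set B := ∫ s in m⁻¹..R, sin (s * t + θ s) / s
  set C := ∫ s in Ioi R, (sin (s * t + θ s) / s - (-1) ^ n * (sin (s * t) / s))
  linarith [abs_add_le (A + B + (-1) ^ n * sinIntegralTail (R * t)) C,
    abs_add_le (A + B) ((-1) ^ n * sinIntegralTail (R * t)), abs_add_le A B]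

end Phase

section ArctanPhase

variable {ι : Type*} [Fintype ι] {γ : ι → ℝ}

lemma abs_neg_two_mul_sum_arctan_le (hγ : ∀ j, 0 < γ j) {s : ℝ} (hs : 0 ≤ s) :
    |-2 * ∑ j, arctan (s / γ j)| ≤ (2 * ∑ j, (γ j)⁻¹) * s := by
  have hnonneg : 0 ≤ ∑ j, arctan (s / γ j) :=
    Finset.sum_nonneg fun j _ => arctan_nonneg.2 (div_nonneg hs (hγ j).le)
  have hle : ∑ j, arctan (s / γ j) ≤ ∑ j, (γ j)⁻¹ * s :=
    Finset.sum_le_sum fun j _ => by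
      rw [inv_mul_eq_div]; exact arctan_le_self (div_nonneg hs (hγ j).le)
  calc |-2 * ∑ j, arctan (s / γ j)| = 2 * ∑ j, arctan (s / γ j) := by
        rw [abs_mul, abs_of_nonneg hnonneg]; norm_num
    _ ≤ 2 * ∑ j, (γ j)⁻¹ * s := by gcongr
    _ = (2 * ∑ j, (γ j)⁻¹) * s := by rw [← Finset.sum_mul, mul_assoc]

lemma abs_neg_two_mul_sum_arctan_add_le (hγ : ∀ j, 0 < γ j) {s : ℝ} (hs : 0 < s) :
    |-2 * ∑ j, arctan (s / γ j) + Fintype.card ι * π| ≤ (2 * ∑ j, γ j) / s := by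
  have hcompl : -2 * ∑ j, arctan (s / γ j) + Fintype.card ι * π = 2 * ∑ j, arctan (γ j / s) := by
    have h : ∀ j, arctan (γ j / s) = π / 2 - arctan (s / γ j) := fun j => by
      rw [← arctan_inv_of_pos (div_pos hs (hγ j)), inv_div]
    simp only [h, Finset.sum_sub_distrib, Finset.sum_const, Finset.card_univ, nsmul_eq_mul]
    ring
  have hle : ∑ j, arctan (γ j / s) ≤ ∑ j, γ j / s :=
    Finset.sum_le_sum fun j _ => arctan_le_self (div_nonneg (hγ j).le hs.le)
  rw [hcompl, abs_of_nonneg (mul_nonneg two_pos.le (Finset.sum_nonneg fun j _ =>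
    arctan_nonneg.2 (div_nonneg (hγ j).le hs.le))), mul_div_assoc, Finset.sum_div]
  linarith

lemma sum_inv_mul_sum_le {a b : ℝ} (ha : 0 < a) (hγ : ∀ j, γ j ∈ Icc a b) :
    (∑ j, (γ j)⁻¹) * ∑ j, γ j ≤ Fintype.card ι ^ 2 * (b / a) := by
  have hinv : ∑ j, (γ j)⁻¹ ≤ Fintype.card ι * a⁻¹ := by
    simpa using Finset.sum_le_sum fun j (_ : j ∈ Finset.univ) => inv_anti₀ ha (hγ j).1
  have hsum : ∑ j, γ j ≤ Fintype.card ι * b := by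
    simpa using Finset.sum_le_sum fun j (_ : j ∈ Finset.univ) => (hγ j).2
  calc (∑ j, (γ j)⁻¹) * ∑ j, γ j ≤ (Fintype.card ι * a⁻¹) * (Fintype.card ι * b) :=
        mul_le_mul hinv hsum (Finset.sum_nonneg fun j _ => ha.le.trans (hγ j).1) (by positivity)
    _ = Fintype.card ι ^ 2 * (b / a) := by ring

end ArctanPhase

lemma half_add_div_pi_le_gammaLK {ℓ : ℕ} (hℓ : 1 ≤ ℓ) {κ x : ℝ} (hκ : 0 < κ)
    (hx : x ≤ 11 / 2 + log (4 * ℓ ^ 2 * κ)) : 1 / 2 + x / π ≤ gammaLK ℓ κ := by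
  have hℓ₀ : (0 : ℝ) < ℓ := by exact_mod_cast hℓ
  have hlog : 2 * log (4 * ℓ * √(κ / π)) = log (4 * ℓ ^ 2 * κ) + log (4 / π) := by
    rw [← log_rpow (by positivity), ← log_mul (by positivity) (by positivity)]
    congr 1
    rw [rpow_two, mul_pow, mul_pow, sq_sqrt (by positivity)]
    field_simp
  have hlog_four_div_pi : 1 - π / 4 ≤ log (4 / π) := by
    simpa using one_sub_inv_le_log_of_pos (by positivity : 0 < 4 / π)
  have hconst : (11 / 2 - log (4 / π)) / π ≤ 1.73 := by
    rw [div_le_iff₀ pi_pos]; linarith [pi_gt_d2]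
  have hx' : x / π ≤ (log (4 * ℓ ^ 2 * κ) + log (4 / π)) / π + (11 / 2 - log (4 / π)) / π := by
    rw [← add_div]; gcongr; linarith
  rw [gammaLK, div_mul_eq_mul_div, hlog]
  linarith

theorem inverse_laplace_transform_bound_general
    (a b : ℝ) (ha : 0 < a) (ℓ : ℕ) (hℓ : 1 ≤ ℓ)
    (γ : Fin ℓ → ℝ) (hγ : ∀ j, γ j ∈ Set.Icc a b)
    (κ : ℝ) (hκ : κ = b / a)
    (θ : ℝ → ℝ) (hθ : ∀ s, θ s = -2 * ∑ j, Real.arctan (s / γ j)) :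
    ∀ t : ℝ, 0 < t → ∃ I : ℝ,
      Tendsto (fun T : ℝ => ∫ s in (0:ℝ)..T, Real.sin (s * t + θ s) / s) atTop (𝓝 I) ∧
      |1 / 2 + ((-1 : ℝ) ^ ℓ / Real.pi) * I| ≤ gammaLK ℓ κ := by
  intro t ht
  have hγ₀ : ∀ j, 0 < γ j := fun j => ha.trans_le (hγ j).1
  have hθc : Continuous θ := by rw [funext hθ]; fun_prop
  have hm : 0 < 2 * ∑ j, (γ j)⁻¹ := mul_pos two_pos <|
    Finset.sum_pos (fun j _ => inv_pos.2 (hγ₀ j)) ⟨⟨0, hℓ⟩, Finset.mem_univ _⟩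
  obtain ⟨I, hlim, hI⟩ := exists_tendsto_integral_sin_add_div (n := ℓ) hθc
    (fun s hs => hθ s ▸ abs_neg_two_mul_sum_arctan_le hγ₀ hs)
    (fun s hs => by simpa [hθ s] using abs_neg_two_mul_sum_arctan_add_le hγ₀ hs) ht hm
  refine ⟨I, hlim, (abs_add_le _ _).trans ?_⟩
  have hκ₁ : 1 ≤ κ := hκ ▸ (one_le_div ha).2 ((hγ ⟨0, hℓ⟩).1.trans (hγ ⟨0, hℓ⟩).2)
  have hℓ₁ : (1 : ℝ) ≤ ℓ := by exact_mod_cast hℓ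
  have hmE : max 1 ((2 * ∑ j, (γ j)⁻¹) * (2 * ∑ j, γ j)) ≤ 4 * ℓ ^ 2 * κ := by
    have hprod := sum_inv_mul_sum_le ha hγ
    rw [Fintype.card_fin, ← hκ] at hprod
    exact max_le (by nlinarith) (by linarith)
  have hI' : |I| ≤ 11 / 2 + Real.log (4 * ℓ ^ 2 * κ) :=
    hI.trans (add_le_add_right (log_le_log (one_pos.trans_le (le_max_left _ _)) hmE) _)
  have hsign : |(-1 : ℝ) ^ ℓ / π * I| = |I| / π := by
    rw [abs_mul, abs_div, abs_of_pos pi_pos]; simp [inv_mul_eq_div]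
  rw [hsign, abs_of_pos (by norm_num : (0 : ℝ) < 1 / 2)]
  exact half_add_div_pi_le_gammaLK hℓ (by linarith) hI'

/-- bound for the inverse Laplace transform of `p(s)/(s p(-s))`. -/
theorem inverse_laplace_transform_bound
    (a b : ℝ) (ha : 0 < a) (hab : a ≤ b) (ℓ : ℕ) (hℓ : 1 ≤ ℓ)
    (γ : Fin ℓ → ℝ) (hγ : ∀ j, γ j ∈ Set.Icc a b)
    (κ : ℝ) (hκ : κ = b / a)
    (θ : ℝ → ℝ) (hθ : ∀ s, θ s = -2 * ∑ j, Real.arctan (s / γ j)) :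
    ∀ t : ℝ, 0 < t → ∃ I : ℝ,
      Tendsto (fun T : ℝ => ∫ s in (0:ℝ)..T, Real.sin (s * t + θ s) / s) atTop (𝓝 I) ∧
      |1 / 2 + ((-1 : ℝ) ^ ℓ / Real.pi) * I| ≤ gammaLK ℓ κ :=
  inverse_laplace_transform_bound_general a b ha ℓ hℓ γ hγ κ hκ θ hθ
end
end

section
/- Let 0 < a < b, Δ := √(b² − ab), T_C(z) := (Δ + z − b)/(Δ − z + b), and â := (b − Δ)/(Δ + b). Then: (i) 0 < â < 1; (ii) T_C maps [a,b] onto [â,1] and maps (−∞,0] into [−1,−â], with T_C(0) = −â, T_C(0) + T_C(a) = 0, T_C(b) = 1, and lim_{z→−∞} T_C(z) = −1; (iii) the map T_C⁻¹(w) := ((b+Δ)w + b−Δ)/(1+w) satisfies T_C⁻¹(T_C(z)) = z for all z in the relevant domain; (iv) 1/â ≤ 4b/a; (v) consequently ρ_{[â,1]} ≤ ρ_{[a,4b]}. -/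
open Matrix Polynomial Set MeasureTheory Filter Topology
open scoped ComplexOrder ENNReal NNReal

noncomputable section

/-!
`T_C` is an increasing Möbius map on the half-line `z < Δ + b` to the left of its pole, with
`1 + T_C z = 2Δ / (Δ - z + b)`; this gives monotonicity, the limit `-1` at `-∞` and the explicit
inverse. The choice of `Δ` makes `Δ² = b² - ab`, i.e. `(b - Δ)(b + Δ) = ab`, which is what puts
`T_C a` at `â = -T_C 0` and gives `1/â = (b + Δ)² / (ab) ≤ 4b/a`.
-/

/-- `T_C` with the parameters `Δ` and `b` made explicit. -/
def mobiusTC (Δ b z : ℝ) : ℝ := (Δ + z - b) / (Δ - z + b)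

section mobiusTC

variable {Δ b z : ℝ}

lemma mobiusTC_eq (hz : z ≠ Δ + b) : mobiusTC Δ b z = 2 * Δ / (Δ - z + b) - 1 := by
  have : Δ - z + b ≠ 0 := fun h => hz (by linarith)
  rw [mobiusTC]
  field_simp
  ring

lemma mobiusTC_strictMonoOn (hΔ : 0 < Δ) : StrictMonoOn (mobiusTC Δ b) (Iio (Δ + b)) := by
  intro x hx y hy hxy
  rw [mobiusTC_eq hx.ne, mobiusTC_eq hy.ne, sub_lt_sub_iff_right]
  exact div_lt_div_of_pos_left (by positivity) (by linarith [mem_Iio.1 hy]) (by linarith)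

lemma continuousOn_mobiusTC : ContinuousOn (mobiusTC Δ b) (Iio (Δ + b)) :=
  ContinuousOn.div (by fun_prop) (by fun_prop) fun z hz => by linarith [mem_Iio.1 hz]

lemma neg_one_lt_mobiusTC (hΔ : 0 < Δ) (hz : z < Δ + b) : -1 < mobiusTC Δ b z := by
  have : 0 < 2 * Δ / (Δ - z + b) := div_pos (by positivity) (by linarith)
  rw [mobiusTC_eq hz.ne]
  linarith

lemma tendsto_mobiusTC_atBot : Tendsto (mobiusTC Δ b) atBot (𝓝 (-1)) := by
  have hden : Tendsto (fun z : ℝ => Δ - z + b) atBot atTop :=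
    tendsto_atTop_add_const_right _ _ (tendsto_atTop_add_const_left _ _ tendsto_neg_atBot_atTop)
  have h := (hden.const_div_atTop (2 * Δ)).sub_const 1
  rw [zero_sub] at h
  refine h.congr' ?_
  filter_upwards [eventually_lt_atBot (Δ + b)] with z hz
  exact (mobiusTC_eq hz.ne).symm

lemma mobiusTC_self (hΔ : Δ ≠ 0) : mobiusTC Δ b b = 1 := by
  rw [mobiusTC, add_sub_cancel_right, sub_add_cancel, div_self hΔ]

lemma mobiusTC_zero : mobiusTC Δ b 0 = -((b - Δ) / (Δ + b)) := by
  rw [mobiusTC, ← neg_div]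
  ring_nf

lemma mobiusTC_of_sq_eq {a : ℝ} (hsq : Δ ^ 2 = b ^ 2 - a * b) (h₁ : Δ + b ≠ 0)
    (h₂ : Δ - a + b ≠ 0) : mobiusTC Δ b a = (b - Δ) / (Δ + b) := by
  rw [mobiusTC, div_eq_div_iff h₂ h₁]
  linear_combination 2 * hsq

/-- The inverse Möbius map: numerator and denominator of `T_C z` sum to `2Δ`. -/
lemma mobiusTC_leftInverse (hΔ : Δ ≠ 0) (hz : z ≠ Δ + b) :
    ((b + Δ) * mobiusTC Δ b z + b - Δ) / (1 + mobiusTC Δ b z) = z := by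
  have hden : Δ - z + b ≠ 0 := fun h => hz (by linarith)
  have hsum : 1 + mobiusTC Δ b z = 2 * Δ / (Δ - z + b) := by
    rw [mobiusTC_eq hz]
    ring
  rw [hsum, div_eq_iff (div_ne_zero (mul_ne_zero two_ne_zero hΔ) hden), mobiusTC]
  field_simp
  ring

end mobiusTC

lemma one_div_sub_div_add_le {a b Δ : ℝ} (ha : 0 < a) (hΔ : 0 ≤ Δ) (hΔb : Δ < b)
    (hsq : Δ ^ 2 = b ^ 2 - a * b) : 1 / ((b - Δ) / (Δ + b)) ≤ 4 * b / a := by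
  have hb : 0 < b := hΔ.trans_lt hΔb
  rw [one_div_div, div_le_div_iff₀ (sub_pos.2 hΔb) ha]
  refine le_of_mul_le_mul_right ?_ hb
  calc (Δ + b) * a * b = (b - Δ) * (Δ + b) ^ 2 := by linear_combination (Δ + b) * hsq
    _ ≤ (b - Δ) * (2 * b) ^ 2 :=
      mul_le_mul_of_nonneg_left (pow_le_pow_left₀ (by linarith) (by linarith) 2) (by linarith)
    _ = 4 * b * (b - Δ) * b := by ring

lemma rho_le_rho {α β α' β' : ℝ} (h₁ : 1 < 4 * β / α) (h₂ : 4 * β / α ≤ 4 * β' / α') :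
    rho α β ≤ rho α' β' := by
  rw [rho, rho, Real.exp_le_exp, neg_div, neg_div, neg_le_neg_iff]
  exact div_le_div_of_nonneg_left (sq_nonneg _) (Real.log_pos h₁)
    (Real.log_le_log (by linarith) h₂)

/-- properties of the Möbius transformation `T_C` mapping
`[-∞,0] ∪ [a,b]` onto `[-1,-â] ∪ [â,1]`. -/
theorem mobius_TC (a b : ℝ) (ha : 0 < a) (hab : a < b)
    (Δ : ℝ) (hΔ : Δ = Real.sqrt (b ^ 2 - a * b))
    (TC : ℝ → ℝ) (hTC : ∀ z, TC z = (Δ + z - b) / (Δ - z + b))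
    (ahat : ℝ) (hahat : ahat = (b - Δ) / (Δ + b))
    (TCinv : ℝ → ℝ) (hTCinv : ∀ w, TCinv w = ((b + Δ) * w + b - Δ) / (1 + w)) :
    (0 < ahat ∧ ahat < 1) ∧
    (TC '' Set.Icc a b = Set.Icc ahat 1 ∧
      (∀ z : ℝ, z ≤ 0 → TC z ∈ Set.Icc (-1) (-ahat)) ∧
      TC 0 = -ahat ∧ TC 0 + TC a = 0 ∧ TC b = 1 ∧
      Tendsto TC atBot (𝓝 (-1))) ∧
    (∀ z ∈ Set.Iic (0 : ℝ) ∪ Set.Icc a b, TCinv (TC z) = z) ∧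
    1 / ahat ≤ 4 * b / a ∧
    rho ahat 1 ≤ rho a (4 * b) := by
  obtain rfl : TC = mobiusTC Δ b := funext hTC
  subst hahat
  have hsq : Δ ^ 2 = b ^ 2 - a * b := by rw [hΔ, Real.sq_sqrt (by nlinarith)]
  have hΔpos : 0 < Δ := hΔ ▸ Real.sqrt_pos.2 (by nlinarith)
  have hΔb : Δ < b := by nlinarith
  have hahat_pos : 0 < (b - Δ) / (Δ + b) := div_pos (by linarith) (by linarith)
  have hahat_lt : (b - Δ) / (Δ + b) < 1 := (div_lt_one (by linarith)).2 (by linarith)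
  have hTCa := mobiusTC_of_sq_eq hsq (by linarith) (by linarith)
  have hmono := (mobiusTC_strictMonoOn (b := b) hΔpos).monotoneOn
  have hbound := one_div_sub_div_add_le ha hΔpos.le hΔb hsq
  refine ⟨⟨hahat_pos, hahat_lt⟩, ⟨?_, fun z hz => ⟨?_, ?_⟩, mobiusTC_zero,
    by rw [mobiusTC_zero, hTCa]; ring, mobiusTC_self hΔpos.ne', tendsto_mobiusTC_atBot⟩,
    fun z hz => ?_, hbound, ?_⟩
  · have hsub : Icc a b ⊆ Iio (Δ + b) :=
      Icc_subset_Iic_self.trans (Iic_subset_Iio.2 (by linarith))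
    rw [← hTCa, ← mobiusTC_self (b := b) hΔpos.ne']
    exact (continuousOn_mobiusTC.mono hsub).image_Icc_of_monotoneOn hab.le (hmono.mono hsub)
  · exact (neg_one_lt_mobiusTC hΔpos (by linarith)).le
  · rw [← mobiusTC_zero]
    exact hmono (by simp only [mem_Iio]; linarith) (by simp only [mem_Iio]; linarith) hz
  · have hzb : z ≤ b := hz.elim (fun h => le_trans h (by linarith)) (·.2)
    rw [hTCinv]
    exact mobiusTC_leftInverse hΔpos.ne' (by linarith : z < Δ + b).ne
  · refine rho_le_rho ?_ ?_
    · rw [mul_div_assoc]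
      linarith [one_lt_one_div hahat_pos hahat_lt]
    · rw [mul_div_assoc, mul_div_assoc]
      linarith
end
end

section
/- Let γ > 0 and let g : [0,γ] → ℝ be a continuously differentiable function that is nonincreasing (g′(s) ≤ 0 on [0,γ]) and positive. Then |∫₀^γ (sin(s)·g(s))/s ds| ≤ 1.852 · g(0). -/
open Matrix Polynomial Set MeasureTheory Filter Topology
open scoped ComplexOrder ENNReal NNReal

noncomputable section

/-!
With `Si x = ∫₀ˣ sinc`, integration by parts gives
`∫₀^γ g · sinc = g γ · Si γ - ∫₀^γ g' · Si`. Since `g' ≤ 0`, `g ≥ 0` and `0 ≤ Si ≤ Si π` on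
`[0, ∞)`, the right-hand side lies between `0` and `Si π · g 0`.

Both facts about `Si` on `[π, ∞)` come from one more integration by parts,
`∫_π^x sin t / t = -1/π - cos x / x - ∫_π^x cos t / t²`, which puts `∫_π^x sinc` in `[-2/π, 0]`;
together with `Si π ≥ 1` this gives `Si ≥ 0`. Finally `1 ≤ Si π ≤ 1.852` is obtained by
integrating the alternating Taylor bounds `sinc ≥ 1 - t²/6` and `sinc ≤ ∑_{k ≤ 6} (-t²)ᵏ/(2k+1)!`
over `[0, π]`; these bounds hold on all of `[0, ∞)` because each Taylor bound for `sin` or `cos`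
integrates to the next one.
-/

open Real intervalIntegral
open Finset (range sum_range_succ sum_range_succ' sum_congr mul_sum sum_neg_distrib)
open scoped Nat

def sinTaylor (n : ℕ) (x : ℝ) : ℝ := ∑ k ∈ range n, (-1) ^ k * x ^ (2 * k + 1) / (2 * k + 1)!
def cosTaylor (n : ℕ) (x : ℝ) : ℝ := ∑ k ∈ range n, (-1) ^ k * x ^ (2 * k) / (2 * k)!

lemma hasDerivAt_sinTaylor (n : ℕ) (x : ℝ) : HasDerivAt (sinTaylor n) (cosTaylor n x) x := by
  refine HasDerivAt.fun_sum fun k _ => ?_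
  refine (((hasDerivAt_pow (2 * k + 1) x).const_mul ((-1 : ℝ) ^ k)).div_const
    ((2 * k + 1)! : ℝ)).congr_deriv ?_
  rw [Nat.factorial_succ]
  push_cast
  field_simp

lemma cosTaylor_succ (n : ℕ) (x : ℝ) :
    cosTaylor (n + 1) x = 1 - ∑ k ∈ range n, (-1) ^ k * x ^ (2 * k + 2) / (2 * k + 2)! := by
  simp only [cosTaylor, sum_range_succ', pow_succ (-1 : ℝ)]
  simp [mul_add, sub_eq_add_neg, ← sum_neg_distrib, neg_div, add_comm]

lemma hasDerivAt_cosTaylor_succ (n : ℕ) (x : ℝ) :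
    HasDerivAt (cosTaylor (n + 1)) (-sinTaylor n x) x := by
  simp only [funext (cosTaylor_succ n), sinTaylor]
  refine (HasDerivAt.fun_sum fun k _ => ?_).const_sub 1
  refine (((hasDerivAt_pow (2 * k + 2) x).const_mul ((-1 : ℝ) ^ k)).div_const
    ((2 * k + 2)! : ℝ)).congr_deriv ?_
  rw [Nat.factorial_succ (2 * k + 1)]
  push_cast
  field_simp
  ring

lemma sinTaylor_zero (n : ℕ) : sinTaylor n 0 = 0 := by simp [sinTaylor]
lemma cosTaylor_succ_zero (n : ℕ) : cosTaylor (n + 1) 0 = 1 := by simp [cosTaylor_succ]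

lemma nonpos_of_deriv_nonpos_of_map_zero {f f' : ℝ → ℝ} (hf : ∀ x, HasDerivAt f (f' x) x)
    (hf' : ∀ x, 0 ≤ x → f' x ≤ 0) (h0 : f 0 = 0) {x : ℝ} (hx : 0 ≤ x) : f x ≤ 0 := by
  have : AntitoneOn f (Ici 0) :=
    antitoneOn_of_hasDerivWithinAt_nonpos (convex_Ici 0)
      (fun y _ => (hf y).continuousAt.continuousWithinAt) (fun y _ => (hf y).hasDerivWithinAt)
      (fun y hy => hf' y (by rw [interior_Ici] at hy; exact le_of_lt hy))
  exact h0 ▸ this self_mem_Ici hx hx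

lemma neg_one_pow_mul_sin_sub_sinTaylor_nonpos_of_cos {n : ℕ}
    (hcos : ∀ x, 0 ≤ x → (-1) ^ n * (cos x - cosTaylor (n + 1) x) ≤ 0) {x : ℝ} (hx : 0 ≤ x) :
    (-1) ^ n * (sin x - sinTaylor (n + 1) x) ≤ 0 :=
  nonpos_of_deriv_nonpos_of_map_zero
    (fun y => ((hasDerivAt_sin y).sub (hasDerivAt_sinTaylor _ y)).const_mul _) hcos
    (by simp [sinTaylor_zero]) hx

theorem neg_one_pow_mul_cos_sub_cosTaylor_nonpos (n : ℕ) {x : ℝ} (hx : 0 ≤ x) :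
    (-1) ^ n * (cos x - cosTaylor (n + 1) x) ≤ 0 := by
  induction n generalizing x with
  | zero => simpa [cosTaylor] using cos_le_one x
  | succ n ih =>
    refine nonpos_of_deriv_nonpos_of_map_zero
      (fun y => ((hasDerivAt_cos y).sub (hasDerivAt_cosTaylor_succ _ y)).const_mul _)
      (fun y hy => ?_) (by simp [cosTaylor_succ_zero]) hx
    have := neg_one_pow_mul_sin_sub_sinTaylor_nonpos_of_cos (fun _ => ih) hy
    rw [pow_succ]
    linarith

theorem neg_one_pow_mul_sin_sub_sinTaylor_nonpos (n : ℕ) {x : ℝ} (hx : 0 ≤ x) :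
    (-1) ^ n * (sin x - sinTaylor (n + 1) x) ≤ 0 :=
  neg_one_pow_mul_sin_sub_sinTaylor_nonpos_of_cos
    (fun _ => neg_one_pow_mul_cos_sub_cosTaylor_nonpos n) hx

def sincTaylor (n : ℕ) (x : ℝ) : ℝ := ∑ k ∈ range n, (-1) ^ k * x ^ (2 * k) / (2 * k + 1)!

lemma continuous_sincTaylor (n : ℕ) : Continuous (sincTaylor n) := by
  unfold sincTaylor
  fun_prop

lemma sinTaylor_eq_mul_sincTaylor (n : ℕ) (x : ℝ) : sinTaylor n x = x * sincTaylor n x := by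
  simp only [sinTaylor, sincTaylor, mul_sum]
  exact sum_congr rfl fun k _ => by ring

theorem neg_one_pow_mul_sinc_sub_sincTaylor_nonpos (n : ℕ) {x : ℝ} (hx : 0 ≤ x) :
    (-1) ^ n * (sinc x - sincTaylor (n + 1) x) ≤ 0 := by
  rcases hx.eq_or_lt with rfl | hx
  · simp [sincTaylor, sum_range_succ']
  · have key : (-1) ^ n * (sinc x - sincTaylor (n + 1) x)
        = (-1) ^ n * (sin x - sinTaylor (n + 1) x) / x := by
      rw [sinc_of_ne_zero hx.ne', sinTaylor_eq_mul_sincTaylor]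
      field_simp
    rw [key]
    exact div_nonpos_of_nonpos_of_nonneg (neg_one_pow_mul_sin_sub_sinTaylor_nonpos n hx.le) hx.le

lemma integral_sincTaylor (n : ℕ) (x : ℝ) : ∫ t in 0..x, sincTaylor n t
    = ∑ k ∈ range n, (-1) ^ k * x ^ (2 * k + 1) / ((2 * k + 1) * (2 * k + 1)!) := by
  unfold sincTaylor
  rw [integral_finsetSum fun k _ => (by fun_prop : Continuous _).intervalIntegrable _ _]
  refine sum_congr rfl fun k _ => ?_
  simp only [mul_div_assoc, intervalIntegral.integral_const_mul, intervalIntegral.integral_div,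
    integral_pow]
  push_cast
  rw [zero_pow (by omega), sub_zero, div_div, ← mul_div_assoc]

lemma sinc_nonneg_of_le_pi {x : ℝ} (hx₀ : 0 ≤ x) (hxπ : x ≤ π) : 0 ≤ sinc x := by
  rcases hx₀.eq_or_lt with rfl | hx₀
  · simp
  · rw [sinc_of_ne_zero hx₀.ne']
    exact div_nonneg (sin_nonneg_of_nonneg_of_le_pi hx₀.le hxπ) hx₀.le

lemma abs_integral_sinc_add_sub_le {a b : ℝ} (ha : 0 < a) (hab : a ≤ b) :
    |(∫ t in a..b, sinc t) + cos b / b - cos a / a| ≤ a⁻¹ - b⁻¹ := by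
  have hne : ∀ t ∈ uIcc a b, t ≠ 0 := fun t ht =>
    ((uIcc_of_le hab ▸ ht).1.trans_lt' ha).ne'
  have hinv_sq : IntervalIntegrable (fun t : ℝ => (t ^ 2)⁻¹) volume a b :=
    ((continuousOn_id.pow 2).inv₀ fun t ht => pow_ne_zero 2 (hne t ht)).intervalIntegrable
  have hsinc : ∫ t in a..b, sinc t = ∫ t in a..b, t⁻¹ * sin t :=
    integral_congr fun t ht => by simp [sinc_of_ne_zero (hne t ht), div_eq_inv_mul]
  have hparts : ∫ t in a..b, t⁻¹ * sin t
      = b⁻¹ * -cos b - a⁻¹ * -cos a - ∫ t in a..b, -(t ^ 2)⁻¹ * -cos t :=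
    integral_mul_deriv_eq_deriv_mul (fun t ht => hasDerivAt_inv (hne t ht))
      (fun t _ => by simpa using (hasDerivAt_cos t).neg) hinv_sq.neg
      (continuous_sin.intervalIntegrable _ _)
  have hinv_sq_eq : ∫ t in a..b, (t ^ 2)⁻¹ = a⁻¹ - b⁻¹ := by
    rw [integral_eq_sub_of_hasDerivAt (f := fun t => -t⁻¹)
      (fun t ht => by simpa using (hasDerivAt_inv (hne t ht)).fun_neg) hinv_sq]
    ring
  have hbound : ‖∫ t in a..b, (t ^ 2)⁻¹ * cos t‖ ≤ ∫ t in a..b, (t ^ 2)⁻¹ := by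
    refine norm_integral_le_of_norm_le hab (.of_forall fun t _ => ?_) hinv_sq
    rw [Real.norm_eq_abs, abs_mul, abs_of_nonneg (inv_nonneg.2 (sq_nonneg t))]
    exact mul_le_of_le_one_right (inv_nonneg.2 (sq_nonneg t)) (abs_cos_le_one t)
  rw [hsinc, hparts, ← hinv_sq_eq, ← abs_neg, ← Real.norm_eq_abs]
  convert hbound using 2
  simp only [neg_mul_neg, div_eq_inv_mul]
  ring

lemma integral_sinc_from_pi_mem_Icc {x : ℝ} (hx : π ≤ x) :
    ∫ t in π..x, sinc t ∈ Icc (-(2 / π)) 0 := by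
  have h := abs_le.1 (abs_integral_sinc_add_sub_le pi_pos hx)
  have hx₀ : 0 < x := pi_pos.trans_le hx
  have hcos : |cos x / x| ≤ x⁻¹ := by
    rw [abs_div, abs_of_pos hx₀, div_eq_inv_mul]
    exact mul_le_of_le_one_right (inv_nonneg.2 hx₀.le) (abs_cos_le_one x)
  rw [cos_pi, neg_div, one_div] at h
  constructor <;> linarith [abs_le.1 hcos, div_eq_mul_inv 2 π]

def sineIntegral (x : ℝ) : ℝ := ∫ t in 0..x, sinc t

lemma sineIntegral_add_integral (a b : ℝ) :
    sineIntegral a + ∫ t in a..b, sinc t = sineIntegral b :=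
  integral_add_adjacent_intervals (continuous_sinc.intervalIntegrable _ _)
    (continuous_sinc.intervalIntegrable _ _)

lemma sineIntegral_pi_le : sineIntegral π ≤ 1.852 := by
  calc sineIntegral π ≤ ∫ t in 0..π, sincTaylor 7 t := by
        refine integral_mono_on pi_nonneg (continuous_sinc.intervalIntegrable _ _)
          ((continuous_sincTaylor 7).intervalIntegrable _ _) fun t ht => ?_
        have h := neg_one_pow_mul_sinc_sub_sincTaylor_nonpos 6 ht.1
        norm_num at h
        linarith
    _ ≤ 1.852 := by
        -- `Si π = 1.85193…`: the slack is below `10⁻⁴`, hence degree 12 and six digits of `π`.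
        rw [integral_sincTaylor]
        norm_num [sum_range_succ, Nat.factorial]
        have ha : (3.141592 : ℝ) ≤ π := pi_gt_d6.le
        have hb : π ≤ 3.141593 := pi_lt_d6.le
        linarith [pow_le_pow_left₀ (by norm_num) ha 3, pow_le_pow_left₀ pi_nonneg hb 5,
          pow_le_pow_left₀ (by norm_num) ha 7, pow_le_pow_left₀ pi_nonneg hb 9,
          pow_le_pow_left₀ (by norm_num) ha 11, pow_le_pow_left₀ pi_nonneg hb 13]

lemma one_le_sineIntegral_pi : 1 ≤ sineIntegral π := by
  calc (1 : ℝ) ≤ ∫ t in 0..π, sincTaylor 2 t := by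
        rw [integral_sincTaylor]
        norm_num [sum_range_succ, Nat.factorial]
        linarith [pow_le_pow_left₀ pi_nonneg pi_lt_d2.le 3, pi_gt_three]
    _ ≤ sineIntegral π := by
        refine integral_mono_on pi_nonneg
          ((continuous_sincTaylor 2).intervalIntegrable _ _)
          (continuous_sinc.intervalIntegrable _ _) fun t ht => ?_
        have h := neg_one_pow_mul_sinc_sub_sincTaylor_nonpos 1 ht.1
        norm_num at h
        linarith

theorem sineIntegral_le_sineIntegral_pi {x : ℝ} (hx : 0 ≤ x) :
    sineIntegral x ≤ sineIntegral π := by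
  rcases le_total x π with hxπ | hπx
  · rw [← sineIntegral_add_integral x π, le_add_iff_nonneg_right]
    exact integral_nonneg hxπ fun t ht => sinc_nonneg_of_le_pi (hx.trans ht.1) ht.2
  · rw [← sineIntegral_add_integral π x, add_le_iff_nonpos_right]
    exact (integral_sinc_from_pi_mem_Icc hπx).2

theorem sineIntegral_nonneg {x : ℝ} (hx : 0 ≤ x) : 0 ≤ sineIntegral x := by
  rcases le_total x π with hxπ | hπx
  · exact integral_nonneg hx fun t ht => sinc_nonneg_of_le_pi ht.1 (ht.2.trans hxπ)
  · have h2π : 2 / π ≤ 1 := (div_le_one pi_pos).2 (by linarith [pi_gt_three])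
    rw [← sineIntegral_add_integral π x]
    linarith [(integral_sinc_from_pi_mem_Icc hπx).1, one_le_sineIntegral_pi]

theorem integral_mul_mem_Icc_of_deriv_nonpos {a b M : ℝ} (hab : a ≤ b) {f g g' : ℝ → ℝ}
    (hf : Continuous f) (hderiv : ∀ s ∈ Icc a b, HasDerivAt g (g' s) s)
    (hcont : ContinuousOn g' (Icc a b)) (hdec : ∀ s ∈ Icc a b, g' s ≤ 0) (hgb : 0 ≤ g b)
    (hF : ∀ x ∈ Icc a b, ∫ t in a..x, f t ∈ Icc 0 M) :
    ∫ s in a..b, g s * f s ∈ Icc 0 (M * g a) := by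
  set F := fun x => ∫ t in a..x, f t
  rw [← uIcc_of_le hab] at hderiv hcont
  have hg'_int : IntervalIntegrable g' volume a b := hcont.intervalIntegrable
  have hg'F_int : IntervalIntegrable (fun s => g' s * F s) volume a b :=
    (hcont.mul (continuous_primitive (fun _ _ => hf.intervalIntegrable _ _) a).continuousOn)
      |>.intervalIntegrable
  have hparts : ∫ s in a..b, g s * f s = g b * F b - g a * F a - ∫ s in a..b, g' s * F s :=
    integral_mul_deriv_eq_deriv_mul hderiv
      (fun x _ => (hf.integral_hasStrictDerivAt a x).hasDerivAt) hg'_int (hf.intervalIntegrable _ _)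
  have hupper : ∫ s in a..b, g' s * F s ≤ 0 := by
    simpa using integral_mono_on hab hg'F_int intervalIntegrable_const fun s hs =>
      mul_nonpos_of_nonpos_of_nonneg (hdec s hs) (hF s hs).1
  have hlower : (g b - g a) * M ≤ ∫ s in a..b, g' s * F s := by
    rw [← integral_eq_sub_of_hasDerivAt hderiv hg'_int, ← intervalIntegral.integral_mul_const]
    exact integral_mono_on hab (hg'_int.mul_const M) hg'F_int fun s hs =>
      mul_le_mul_of_nonpos_left (hF s hs).2 (hdec s hs)
  have hFb := hF b (right_mem_Icc.2 hab)
  have hFa : F a = 0 := integral_same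
  rw [hparts, hFa]
  constructor
  · nlinarith [mul_nonneg hgb hFb.1]
  · nlinarith [mul_le_mul_of_nonneg_left hFb.2 hgb]

/-- bound for the integral of the sinc function against a decreasing
positive `C¹` weight. -/
theorem sinc_weighted_integral_bound (γ : ℝ) (hγ : 0 < γ) (g g' : ℝ → ℝ)
    (hderiv : ∀ s ∈ Set.Icc (0 : ℝ) γ, HasDerivAt g (g' s) s)
    (hcont : ContinuousOn g' (Set.Icc 0 γ))
    (hdec : ∀ s ∈ Set.Icc (0 : ℝ) γ, g' s ≤ 0)
    (hpos : ∀ s ∈ Set.Icc (0 : ℝ) γ, 0 < g s) :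
    |∫ s in (0 : ℝ)..γ, Real.sin s * g s / s| ≤ 1.852 * g 0 := by
  have hsinc : ∫ s in (0 : ℝ)..γ, sin s * g s / s = ∫ s in (0 : ℝ)..γ, g s * sinc s := by
    refine integral_congr_ae (.of_forall fun s hs => ?_)
    rw [uIoc_of_le hγ.le] at hs
    rw [sinc_of_ne_zero hs.1.ne']
    ring
  have h := integral_mul_mem_Icc_of_deriv_nonpos hγ.le continuous_sinc hderiv hcont hdec
    (hpos γ (right_mem_Icc.2 hγ.le)).le fun x hx =>
      ⟨sineIntegral_nonneg hx.1, (sineIntegral_le_sineIntegral_pi hx.1).trans sineIntegral_pi_le⟩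
  rw [hsinc, abs_of_nonneg h.1]
  exact h.2
end
end
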